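/- Let G be a subset of a finite orthonormal basis B closed under the string edit maps of both U and its adjoint U†. Then the orthogonal projection P_G onto span(G) commutes with U. -/

import Mathlib

/-!
Since `U` and `U†` map each `B b` with `b ∈ G` to a vector whose coefficients vanish outside `G`,
`span G` is invariant under both; invariance under `U†` makes `(span G)ᗮ` invariant under `U`.
`P` is the orthogonal projection onto `span G`, and an idempotent commutes with `U` as soon as its
range and kernel are `U`-invariant.
-/

open Submodule Module.End InnerProductSpace

section

variable {𝕜 E ι : Type*} [RCLike 𝕜] [NormedAddCommGroup E] [InnerProductSpace 𝕜 E]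

theorem Submodule.commute_starProjection_of_mem_invtSubmodule [CompleteSpace E]
    {K : Submodule 𝕜 E} [K.HasOrthogonalProjection] {T : E →L[𝕜] E}
    (hT : K ∈ invtSubmodule (T : E →ₗ[𝕜] E))
    (hT' : K ∈ invtSubmodule (T.adjoint : E →ₗ[𝕜] E)) :
    Commute K.starProjection T := by
  have hcomm : Commute (K.starProjection : E →ₗ[𝕜] E) T := by
    rw [LinearMap.IsIdempotentElem.commute_iff
      (ContinuousLinearMap.IsIdempotentElem.toLinearMap K.isIdempotentElem_starProjection)]
    exact ⟨by simpa using hT, by simpa using T.orthogonal_mem_invtSubmodule hT'⟩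
  exact ContinuousLinearMap.coe_injective congr($hcomm.eq)

theorem Orthonormal.starProjection_span_image_apply [DecidableEq E] {v : ι → E}
    (hv : Orthonormal 𝕜 v) (s : Finset ι) (x : E) :
    (span 𝕜 (s.image v : Set E)).starProjection x = ∑ i ∈ s, inner 𝕜 (v i) x • v i := by
  rw [starProjection_apply, (OrthonormalBasis.span hv s).orthogonalProjectionOnto_apply_eq_sum]
  simp [← s.sum_coe_sort]

theorem OrthonormalBasis.mem_span_image_of_inner_ne_zero [Fintype ι] (b : OrthonormalBasis ι 𝕜 E)
    {s : Set ι} {x : E} (h : ∀ i, inner 𝕜 (b i) x ≠ 0 → i ∈ s) : x ∈ span 𝕜 (b '' s) := by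
  rw [← b.sum_repr' x]
  refine sum_mem fun i _ ↦ ?_
  by_cases hi : inner 𝕜 (b i) x = 0
  · simp [hi]
  · exact smul_mem _ _ (subset_span ⟨i, h i hi, rfl⟩)

theorem OrthonormalBasis.span_image_mem_invtSubmodule [Fintype ι] (b : OrthonormalBasis ι 𝕜 E)
    {s : Set ι} {T : E →ₗ[𝕜] E} (h : ∀ j ∈ s, ∀ i, inner 𝕜 (b i) (T (b j)) ≠ 0 → i ∈ s) :
    span 𝕜 (b '' s) ∈ invtSubmodule T := by
  rw [mem_invtSubmodule_iff_map_le, map_span_le]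
  rintro _ ⟨j, hj, rfl⟩
  exact b.mem_span_image_of_inner_ne_zero (h j hj)

end

theorem closed_subset_projection_commutes_general
    {H : Type*} [NormedAddCommGroup H] [InnerProductSpace ℂ H]
    [CompleteSpace H]
    {ι : Type*} [Fintype ι]
    (B : OrthonormalBasis ι ℂ H) (G : Finset ι)
    (U P : H →L[ℂ] H)
    (hP : ∀ x : H, P x = ∑ i ∈ G, (inner ℂ (B i) x : ℂ) • B i)
    (hclosed : ∀ b ∈ G, ∀ b' : ι,
      ((inner ℂ (B b') (U (B b)) : ℂ) ≠ 0 ∨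
        (inner ℂ (B b') ((ContinuousLinearMap.adjoint U) (B b)) : ℂ) ≠ 0) → b' ∈ G) :
    P ∘L U = U ∘L P := by
  classical
  set K := span ℂ (G.image B : Set H)
  have hPK : P = K.starProjection :=
    ContinuousLinearMap.ext fun x ↦ by rw [hP, B.orthonormal.starProjection_span_image_apply]
  have span_mem_invtSubmodule (T : H →L[ℂ] H)
      (hT : ∀ b ∈ G, ∀ i, inner ℂ (B i) (T (B b)) ≠ 0 → i ∈ G) :
      K ∈ invtSubmodule (T : H →ₗ[ℂ] H) := by
    simpa only [K, Finset.coe_image] using B.span_image_mem_invtSubmodule hT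
  rw [hPK]
  exact (K.commute_starProjection_of_mem_invtSubmodule
    (span_mem_invtSubmodule U fun b hb i h ↦ hclosed b hb i (.inl h))
    (span_mem_invtSubmodule U.adjoint fun b hb i h ↦ hclosed b hb i (.inr h))).eq

/-- if `G` is closed under the string edit maps of both `U` and `U†`,
then the orthogonal projection `P_G` onto `span G` commutes with `U`. -/
theorem closed_subset_projection_commutes
    {H : Type*} [NormedAddCommGroup H] [InnerProductSpace ℂ H] [FiniteDimensional ℂ H]
    [CompleteSpace H]
    {ι : Type*} [Fintype ι]
    (B : OrthonormalBasis ι ℂ H) (G : Finset ι)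
    (U P : H →L[ℂ] H)
    (hU : U ∈ unitary (H →L[ℂ] H))
    (hP : ∀ x : H, P x = ∑ i ∈ G, (inner ℂ (B i) x : ℂ) • B i)
    (hclosed : ∀ b ∈ G, ∀ b' : ι,
      ((inner ℂ (B b') (U (B b)) : ℂ) ≠ 0 ∨
        (inner ℂ (B b') ((ContinuousLinearMap.adjoint U) (B b)) : ℂ) ≠ 0) → b' ∈ G) :
    P ∘L U = U ∘L P :=
  closed_subset_projection_commutes_general B G U P hP hclosed
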